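/- (Measure-theoretic form of the paper's main theorem on the critical sampling frequency f_DR.) Let S : ℝ → ℝ be measurable, nonnegative and Lebesgue-integrable, let θ > 0, F_θ := {f ∈ ℝ : S(f) > θ}, and set f_DR := μ(F_θ). Let f_s ≥ f_DR and let F ⊆ ℝ be measurable with μ(F) ≤ f_s such that ∫_F S(f) df ≥ ∫_G S(f) df for every measurable G with μ(G) ≤ f_s. Then ∫_F max(S(f) − θ, 0) df = ∫_ℝ max(S(f) − θ, 0) df and ∫_F log₂⁺(S(f)/θ) df = ∫_ℝ log₂⁺(S(f)/θ) df. Consequently the constrained waterfilling expressions (∫_ℝ S) − ∫_F [S − θ]⁺ and ½ ∫_F log₂⁺(S/θ) at any sampling-frequency budget f_s ≥ f_DR coincide with Pinsker's unconstrained distortion-rate quantities ∫_ℝ min(S, θ) and ½ ∫_ℝ log₂⁺(S/θ). -/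

import Mathlib

/-!
An energy-maximizing set `F` contains `{θ < S}` up to a null set. Otherwise a piece of
`{θ < S} ∖ F` of positive measure could be added to `F` if the budget allows, or else exchanged
for a piece of `F ∖ {θ < S}` of the same measure (Lebesgue measure has no atoms), and either
move strictly increases `∫_F S` because `S > θ` on what is gained and `S ≤ θ` on what is lost.
The integrands `[S - θ]⁺` and `log₂⁺ (S / θ)` vanish off `{θ < S}`, so their integrals over `F`
and over `ℝ` agree, and `S - [S - θ]⁺ = min S θ` gives the distortion.
-/

open MeasureTheory Set Filter
open scoped ENNReal

lemma lipschitzWith_one_volume_real_inter_Iic {A : Set ℝ} (hA : volume A ≠ ∞) :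
    LipschitzWith 1 fun t => volume.real (A ∩ Iic t) := by
  refine LipschitzWith.of_le_add fun t s => ?_
  have hsub : A ∩ Iic t ⊆ (A ∩ Iic s) ∪ Ioc s t := fun x ⟨hxA, hxt⟩ =>
    (le_or_gt x s).imp (fun hxs => ⟨hxA, hxs⟩) fun hxs => ⟨hxs, hxt⟩
  calc volume.real (A ∩ Iic t)
      ≤ volume.real ((A ∩ Iic s) ∪ Ioc s t) :=
        measureReal_mono hsub (measure_union_ne_top
          (measure_ne_top_of_subset inter_subset_left hA) measure_Ioc_lt_top.ne)
    _ ≤ volume.real (A ∩ Iic s) + volume.real (Ioc s t) := measureReal_union_le _ _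
    _ ≤ volume.real (A ∩ Iic s) + dist t s := by
        rw [Real.volume_real_Ioc, Real.dist_eq]
        gcongr
        exact max_le (le_abs_self _) (abs_nonneg _)

/-- Intermediate value theorem for `t ↦ volume (A ∩ Iic t)`, which runs from `0` to
`volume A`. -/
lemma exists_subset_volume_eq {A : Set ℝ} (hA : MeasurableSet A) (hfin : volume A ≠ ∞)
    {r : ℝ≥0∞} (hr : r ≤ volume A) : ∃ B ⊆ A, MeasurableSet B ∧ volume B = r := by
  obtain rfl | hr0 := eq_zero_or_pos r
  · exact ⟨∅, empty_subset _, .empty, measure_empty⟩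
  obtain rfl | hrA := hr.eq_or_lt
  · exact ⟨A, subset_rfl, hA, rfl⟩
  have hmono : Monotone fun t : ℝ => A ∩ Iic t :=
    fun _ _ hst => inter_subset_inter_right _ (Iic_subset_Iic.2 hst)
  have hfin' : ∀ t, volume (A ∩ Iic t) ≠ ∞ :=
    fun _ => measure_ne_top_of_subset inter_subset_left hfin
  have hbot : ∀ᶠ t in atBot, volume (A ∩ Iic t) < r := by
    have hempty : ⋂ t : ℝ, A ∩ Iic t = ∅ := by
      rw [← inter_iInter, eq_empty_iff_forall_notMem]
      exact fun x hx => absurd (mem_iInter.1 hx.2 (x - 1)) (by simp)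
    have := tendsto_measure_iInter_atBot (μ := volume)
      (fun t => (hA.inter measurableSet_Iic).nullMeasurableSet) hmono ⟨0, hfin' 0⟩
    rw [hempty, measure_empty] at this
    exact this.eventually (gt_mem_nhds hr0)
  have htop : ∀ᶠ t in atTop, r < volume (A ∩ Iic t) := by
    have := tendsto_measure_iUnion_atTop (μ := volume) hmono
    rw [← inter_iUnion, iUnion_Iic, inter_univ] at this
    exact this.eventually (lt_mem_nhds hrA)
  obtain ⟨a, ha⟩ := hbot.exists
  obtain ⟨b, hb⟩ := htop.exists
  obtain ⟨t, ht⟩ := mem_range_of_exists_le_of_exists_ge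
    (lipschitzWith_one_volume_real_inter_Iic hfin).continuous
    ⟨a, ((ENNReal.toReal_lt_toReal (hfin' a) hrA.ne_top).2 ha).le⟩
    ⟨b, ((ENNReal.toReal_lt_toReal hrA.ne_top (hfin' b)).2 hb).le⟩
  exact ⟨A ∩ Iic t, inter_subset_left, hA.inter measurableSet_Iic,
    (ENNReal.toReal_eq_toReal_iff' (hfin' t) hrA.ne_top).1 ht⟩

section SetIntegralBounds

variable {α : Type*} [MeasurableSpace α] {μ : Measure α} {f : α → ℝ} {c : ℝ} {s : Set α}

lemma setIntegral_gt_of_const_lt_real (hs : MeasurableSet s) (hμs : μ s ≠ ∞) (hμs₀ : μ s ≠ 0)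
    (hf : ∀ x ∈ s, c < f x) (hfi : IntegrableOn f s μ) :
    c * μ.real s < ∫ x in s, f x ∂μ := by
  have hc : IntegrableOn (fun _ => c) s μ := integrableOn_const hμs
  have hpos : 0 < ∫ x in s, (f x - c) ∂μ := by
    rw [setIntegral_pos_iff_support_of_nonneg_ae (f := fun x => f x - c) _ (hfi.sub hc)]
    · have hsupp : s ⊆ Function.support fun x => f x - c :=
        fun x hx => sub_ne_zero.2 (hf x hx).ne'
      rwa [inter_eq_self_of_subset_right hsupp, pos_iff_ne_zero]
    · exact (ae_restrict_iff' hs).2 (ae_of_all _ fun x hx => sub_nonneg.2 (hf x hx).le)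
  rwa [integral_sub hfi hc, setIntegral_const, smul_eq_mul, mul_comm, sub_pos] at hpos

lemma setIntegral_le_of_le_const_real (hs : MeasurableSet s) (hμs : μ s ≠ ∞)
    (hf : ∀ x ∈ s, f x ≤ c) (hfi : IntegrableOn f s μ) :
    ∫ x in s, f x ∂μ ≤ c * μ.real s := by
  rw [mul_comm, ← smul_eq_mul, ← setIntegral_const]
  exact setIntegral_mono_on hfi (integrableOn_const hμs) hs hf

end SetIntegralBounds

/-- The paper's energy-maximizing set `F*`, for the budget `b = f_s`. -/
def IsEnergyMaximizing {α : Type*} [MeasurableSpace α] (μ : Measure α) (S : α → ℝ)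
    (b : ℝ≥0∞) (F : Set α) : Prop :=
  MeasurableSet F ∧ μ F ≤ b ∧
    ∀ G, MeasurableSet G → μ G ≤ b → ∫ x in G, S x ∂μ ≤ ∫ x in F, S x ∂μ

namespace IsEnergyMaximizing

section

variable {α : Type*} [MeasurableSpace α] {μ : Measure α} {S : α → ℝ} {b : ℝ≥0∞} {F : Set α}

lemma setIntegral_le_of_exchange (hF : IsEnergyMaximizing μ S b F) (hS : Integrable S μ)
    {A B : Set α} (hA : MeasurableSet A) (hAF : Disjoint A F) (hB : MeasurableSet B)
    (hBF : B ⊆ F) (hμ : μ (F \ B ∪ A) ≤ b) :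
    ∫ x in A, S x ∂μ ≤ ∫ x in B, S x ∂μ := by
  have hG := hF.2.2 _ ((hF.1.diff hB).union hA) hμ
  rw [setIntegral_union (hAF.symm.mono_left sdiff_subset) hA hS.integrableOn hS.integrableOn,
    ← sdiff_union_of_subset hBF,
    setIntegral_union disjoint_sdiff_left hB hS.integrableOn hS.integrableOn,
    sdiff_union_of_subset hBF] at hG
  linarith

/-- Trading `B` (where `S ≤ θ`) for `A` (where `S > θ`) would gain at least
`θ * (μ A - μ B) ≥ 0`, strictly if `μ A ≠ 0`. -/
lemma measure_eq_zero_of_exchange (hF : IsEnergyMaximizing μ S b F) (hS : Integrable S μ)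
    {θ : ℝ} (hθ : 0 < θ) {A B : Set α} (hA : MeasurableSet A) (hAT : A ⊆ {x | θ < S x} \ F)
    (hB : MeasurableSet B) (hBT : B ⊆ F \ {x | θ < S x}) (hAfin : μ A ≠ ∞)
    (hBA : μ B ≤ μ A) (hμ : μ (F \ B ∪ A) ≤ b) :
    μ A = 0 := by
  by_contra hA₀
  have hle := hF.setIntegral_le_of_exchange hS hA
    (disjoint_left.2 fun _ hx => (hAT hx).2) hB (hBT.trans sdiff_subset) hμ
  have hlow := setIntegral_gt_of_const_lt_real hA hAfin hA₀ (fun x hx => (hAT hx).1)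
    hS.integrableOn
  have hup := setIntegral_le_of_le_const_real hB (ne_top_of_le_ne_top hAfin hBA)
    (fun x hx => not_lt.1 (hBT hx).2) hS.integrableOn
  have hreal : μ.real B ≤ μ.real A := ENNReal.toReal_mono hAfin hBA
  have := mul_le_mul_of_nonneg_left hreal hθ.le
  linarith

end

theorem volume_setOf_lt_sdiff_eq_zero {S : ℝ → ℝ} {θ : ℝ} {b : ℝ≥0∞} {F : Set ℝ}
    (hF : IsEnergyMaximizing volume S b F) (hS : Integrable S) (hSm : Measurable S)
    (hθ : 0 < θ) (hTb : volume {x | θ < S x} ≤ b) (hb : b ≠ ∞) :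
    volume ({x | θ < S x} \ F) = 0 := by
  set T := {x | θ < S x}
  have hT : MeasurableSet T := measurableSet_lt measurable_const hSm
  have hTFfin : volume (T \ F) ≠ ∞ :=
    measure_ne_top_of_subset sdiff_subset (ne_top_of_le_ne_top hb hTb)
  by_contra hTF₀
  by_cases hroom : volume F + volume (T \ F) ≤ b
  · refine hTF₀ (hF.measure_eq_zero_of_exchange hS hθ (hT.diff hF.1) subset_rfl .empty
      (empty_subset _) hTFfin (by simp) ?_)
    rw [sdiff_empty]
    exact (measure_union_le _ _).trans hroom
  have hFT₀ : volume (F \ T) ≠ 0 := by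
    intro h
    refine hroom (le_of_eq_of_le ?_ hTb)
    rw [← measure_inter_add_sdiff F hT, h, add_zero, inter_comm, measure_inter_add_sdiff T hF.1]
  set r := min (volume (T \ F)) (volume (F \ T))
  obtain ⟨A, hAT, hA, hAr⟩ := exists_subset_volume_eq (hT.diff hF.1) hTFfin (min_le_left _ _)
  obtain ⟨B, hBF, hB, hBr⟩ := exists_subset_volume_eq (hF.1.diff hT)
    (measure_ne_top_of_subset sdiff_subset (ne_top_of_le_ne_top hb hF.2.1)) (min_le_right _ _)
  have hvol : volume (F \ B ∪ A) ≤ b :=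
    calc volume (F \ B ∪ A) ≤ volume (F \ B) + volume B := by
          rw [hBr, ← hAr]; exact measure_union_le _ _
      _ = volume F := by
          rw [← measure_sdiff_add_inter F hB, inter_eq_right.2 (hBF.trans sdiff_subset)]
      _ ≤ b := hF.2.1
  have hr₀ : r ≠ 0 := (lt_min (pos_iff_ne_zero.2 hTF₀) (pos_iff_ne_zero.2 hFT₀)).ne'
  exact hr₀ (hAr.symm.trans (hF.measure_eq_zero_of_exchange hS hθ hA hAT hB hBF
    (measure_ne_top_of_subset hAT hTFfin) (hBr.trans hAr.symm).le hvol))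

end IsEnergyMaximizing

/-- Measure-theoretic form of the paper's main theorem on the critical
sampling frequency `f_DR = μ {S > θ}`: for any sampling budget `f_s ≥ f_DR` and any
energy-maximizing set `F` of measure at most `f_s`, the constrained waterfilling
rate and distortion expressions over `F` coincide with Pinsker's unconstrained ones. -/
theorem critical_sampling_frequency_achieves_DRF
    (S : ℝ → ℝ) (hSmeas : Measurable S) (hSnonneg : ∀ f, 0 ≤ S f)
    (hSint : Integrable S) (θ : ℝ) (hθ : 0 < θ)
    (fs : ℝ) (hfs : volume {f : ℝ | θ < S f} ≤ ENNReal.ofReal fs)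
    (F : Set ℝ) (hFmeas : MeasurableSet F)
    (hFle : volume F ≤ ENNReal.ofReal fs)
    (hmax : ∀ G : Set ℝ, MeasurableSet G → volume G ≤ ENNReal.ofReal fs →
      ∫ f in G, S f ≤ ∫ f in F, S f) :
    (∫ f in F, max (S f - θ) 0 = ∫ f, max (S f - θ) 0) ∧
    (∫ f in F, max (Real.logb 2 (S f / θ)) 0 = ∫ f, max (Real.logb 2 (S f / θ)) 0) ∧
    ((∫ f, S f) - (∫ f in F, max (S f - θ) 0) = ∫ f, min (S f) θ) := by
  have hnull := IsEnergyMaximizing.volume_setOf_lt_sdiff_eq_zero ⟨hFmeas, hFle, hmax⟩ hSint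
    hSmeas hθ hfs ENNReal.ofReal_ne_top
  have hrestrict : ∀ g : ℝ → ℝ, (∀ x, S x ≤ θ → g x = 0) → ∫ x in F, g x = ∫ x, g x :=
    fun g hg => setIntegral_eq_integral_of_ae_compl_eq_zero <| by
      filter_upwards [measure_eq_zero_iff_ae_notMem.1 hnull] with x hx hxF
      exact hg x (not_lt.1 fun hθx => hx ⟨hθx, hxF⟩)
  have hexcess := hrestrict _ fun x hx => max_eq_right (sub_nonpos.2 hx)
  refine ⟨hexcess, hrestrict _ fun x hx => max_eq_right <|
    Real.logb_nonpos one_lt_two (div_nonneg (hSnonneg x) hθ.le) ((div_le_one hθ).2 hx), ?_⟩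
  have hexcess_int : Integrable fun x => max (S x - θ) 0 :=
    hSint.mono' (by fun_prop) (ae_of_all _ fun x => by
      rw [Real.norm_of_nonneg (le_max_right _ _)]
      exact max_le (by linarith) (hSnonneg x))
  rw [hexcess, ← integral_sub hSint hexcess_int]
  congr 1 with x
  rcases le_total (S x) θ with h | h <;> simp [h]
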